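/- If R_m = R for all m, and Cov(V(z_k, Y), V(z_l, Y)) >= 0 for all k != l, then Var(theta_hat_s) <= Var(tilde_theta) <= Var(theta_hat): the Partitioned MC estimator has smaller variance than the Shared Sample MC estimator, which in turn has smaller variance than the basic MC estimator. -/

import Mathlib

/-!
Write `g y = ∑ₘ V(zₘ, y) P(Dₘ)`. Expanding its variance as
`∑ₖ ∑ₗ P(Dₖ) P(Dₗ) Cov(V(zₖ, ·), V(zₗ, ·))`, the diagonal terms form the partitioned variance and
the off-diagonal ones are nonnegative by assumption. On the other hand `g` has mean `θ`, so
`Var g = E_Y (E_Z [V(Z, Y) - θ])² ≤ E_Y E_Z (V(Z, Y) - θ)² = Var V(X)` by Jensen's inequality: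
averaging out `Z` can only reduce the variance.
-/

/-- Mean of f under the density pY on the finite space {0,1}^k. -/
def meanY (k : ℕ) (pY : (Fin k → Bool) → ℝ) (f : (Fin k → Bool) → ℝ) : ℝ :=
  ∑ y : Fin k → Bool, f y * pY y

/-- Variance of f under the density pY. -/
def varY (k : ℕ) (pY : (Fin k → Bool) → ℝ) (f : (Fin k → Bool) → ℝ) : ℝ :=
  ∑ y : Fin k → Bool, (f y - meanY k pY f) ^ 2 * pY y

/-- Covariance of f and g under the density pY. -/
def covY (k : ℕ) (pY : (Fin k → Bool) → ℝ) (f g : (Fin k → Bool) → ℝ) : ℝ :=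
  ∑ y : Fin k → Bool, (f y - meanY k pY f) * (g y - meanY k pY g) * pY y

open Finset

lemma injOn_testBit_range_two_pow (r : ℕ) :
    Set.InjOn (fun (m : ℕ) (j : Fin r) => m.testBit j) (range (2 ^ r)) := by
  intro m hm n hn hmn
  refine Nat.eq_of_testBit_eq fun i => ?_
  by_cases hi : i < r
  · exact congr_fun hmn ⟨i, hi⟩
  · have hle : 2 ^ r ≤ 2 ^ i := Nat.pow_le_pow_right two_pos (not_lt.1 hi)
    rw [Nat.testBit_lt_two_pow ((mem_range.1 hm).trans_le hle),
      Nat.testBit_lt_two_pow ((mem_range.1 hn).trans_le hle)]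

lemma sum_range_two_pow_testBit {M : Type*} [AddCommMonoid M] (r : ℕ)
    (F : (Fin r → Bool) → M) :
    ∑ m ∈ range (2 ^ r), F (fun j => m.testBit j) = ∑ z, F z := by
  have hinj := injOn_testBit_range_two_pow r
  refine sum_nbij _ (fun _ _ => mem_univ _) hinj ?_ fun _ _ => rfl
  exact surjOn_of_injOn_of_card_le _ (fun _ _ => mem_coe.2 (mem_univ _)) hinj (by simp)

lemma sq_sum_mul_le_sum_sq_mul {ι : Type*} (s : Finset ι) (a w : ι → ℝ)
    (hw₀ : ∀ i ∈ s, 0 ≤ w i) (hw₁ : ∑ i ∈ s, w i = 1) :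
    (∑ i ∈ s, a i * w i) ^ 2 ≤ ∑ i ∈ s, a i ^ 2 * w i := by
  simpa only [smul_eq_mul, mul_comm (w _)] using
    (even_two.convexOn_pow (𝕜 := ℝ)).map_sum_le hw₀ hw₁ fun i _ => Set.mem_univ (a i)

section Moments

variable {ι : Type*} {k : ℕ} (pY : (Fin k → Bool) → ℝ)

lemma covY_self (f : (Fin k → Bool) → ℝ) : covY k pY f f = varY k pY f := by
  simp only [covY, varY, sq]

lemma meanY_sum_mul (s : Finset ι) (f : ι → (Fin k → Bool) → ℝ) (w : ι → ℝ) :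
    meanY k pY (fun y => ∑ i ∈ s, f i y * w i) = ∑ i ∈ s, meanY k pY (f i) * w i := by
  simp only [meanY, sum_mul]
  rw [sum_comm]
  exact sum_congr rfl fun i _ => sum_congr rfl fun y _ => by ring

lemma varY_sum_mul (s : Finset ι) (f : ι → (Fin k → Bool) → ℝ) (w : ι → ℝ) :
    varY k pY (fun y => ∑ i ∈ s, f i y * w i)
      = ∑ i ∈ s, ∑ j ∈ s, covY k pY (f i) (f j) * (w i * w j) := by
  have hcentered : ∀ y, ∑ i ∈ s, f i y * w i - meanY k pY (fun y => ∑ i ∈ s, f i y * w i)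
      = ∑ i ∈ s, (f i y - meanY k pY (f i)) * w i := by
    intro y
    simp only [meanY_sum_mul, sub_mul, sum_sub_distrib]
  simp only [varY, covY, hcentered, sq, sum_mul_sum]
  simp only [sum_mul]
  rw [sum_comm]
  refine sum_congr rfl fun i _ => ?_
  rw [sum_comm]
  exact sum_congr rfl fun j _ => sum_congr rfl fun y _ => by ring

lemma sum_varY_mul_sq_le_varY_sum_mul (s : Finset ι) (f : ι → (Fin k → Bool) → ℝ)
    (w : ι → ℝ) (hw : ∀ i ∈ s, 0 ≤ w i)
    (hcov : ∀ i ∈ s, ∀ j ∈ s, i ≠ j → 0 ≤ covY k pY (f i) (f j)) :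
    ∑ i ∈ s, varY k pY (f i) * w i ^ 2 ≤ varY k pY (fun y => ∑ i ∈ s, f i y * w i) := by
  classical
  rw [varY_sum_mul]
  refine sum_le_sum fun i hi => ?_
  rw [← add_sum_erase s _ hi, covY_self, sq]
  refine le_add_of_nonneg_right (sum_nonneg fun j hj => ?_)
  obtain ⟨hji, hj⟩ := mem_erase.1 hj
  exact mul_nonneg (hcov i hi j hj hji.symm) (mul_nonneg (hw i hi) (hw j hj))

lemma varY_sum_mul_le (s : Finset ι) (f : ι → (Fin k → Bool) → ℝ) (w : ι → ℝ)
    (hw₀ : ∀ i ∈ s, 0 ≤ w i) (hw₁ : ∑ i ∈ s, w i = 1) (hpY : ∀ y, 0 ≤ pY y) :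
    varY k pY (fun y => ∑ i ∈ s, f i y * w i) ≤
      ∑ i ∈ s, ∑ y, (f i y - ∑ j ∈ s, ∑ y, f j y * (w j * pY y)) ^ 2 * (w i * pY y) := by
  set θ := ∑ j ∈ s, ∑ y, f j y * (w j * pY y)
  have hmean : meanY k pY (fun y => ∑ i ∈ s, f i y * w i) = θ := by
    rw [meanY_sum_mul]
    simp only [meanY, sum_mul, θ]
    exact sum_congr rfl fun i _ => sum_congr rfl fun y _ => by ring
  have hcentered : ∀ y, ∑ i ∈ s, f i y * w i - θ = ∑ i ∈ s, (f i y - θ) * w i := by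
    intro y
    simp only [sub_mul, sum_sub_distrib, ← mul_sum, hw₁, mul_one]
  calc varY k pY (fun y => ∑ i ∈ s, f i y * w i)
      = ∑ y, (∑ i ∈ s, (f i y - θ) * w i) ^ 2 * pY y := by
        simp only [varY, hmean, hcentered]
    _ ≤ ∑ y, (∑ i ∈ s, (f i y - θ) ^ 2 * w i) * pY y :=
        sum_le_sum fun y _ =>
          mul_le_mul_of_nonneg_right (sq_sum_mul_le_sum_sq_mul s _ w hw₀ hw₁) (hpY y)
    _ = ∑ i ∈ s, ∑ y, (f i y - θ) ^ 2 * (w i * pY y) := by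
        simp only [sum_mul, mul_assoc]
        exact sum_comm

end Moments

theorem partitioned_vs_shared_vs_basic_general (r k : ℕ) (R : ℝ) (hR : 0 < R)
    (pZ : (Fin r → Bool) → ℝ) (pY : (Fin k → Bool) → ℝ)
    (V : (Fin r → Bool) → (Fin k → Bool) → ℝ)
    (hpZ0 : ∀ z, 0 ≤ pZ z) (hpZ1 : ∑ z : Fin r → Bool, pZ z = 1)
    (hpY0 : ∀ y, 0 ≤ pY y)
    (hcov : ∀ kk ∈ Finset.range (2 ^ r), ∀ ll ∈ Finset.range (2 ^ r), kk ≠ ll →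
      0 ≤ covY k pY (V (fun j : Fin r => kk.testBit j)) (V (fun j : Fin r => ll.testBit j))) :
    (fun θ : ℝ =>
      (fun varPart varShared varBasic : ℝ =>
        varPart ≤ varShared ∧ varShared ≤ varBasic)
        ((1 / R) * ∑ m ∈ Finset.range (2 ^ r),
          varY k pY (V (fun j : Fin r => m.testBit j)) * pZ (fun j : Fin r => m.testBit j) ^ 2)
        ((1 / R) * varY k pY (fun y => ∑ m ∈ Finset.range (2 ^ r),
          V (fun j : Fin r => m.testBit j) y * pZ (fun j : Fin r => m.testBit j)))
        ((1 / R) * ∑ z : Fin r → Bool, ∑ y : Fin k → Bool,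
          (V z y - θ) ^ 2 * (pZ z * pY y)))
      (∑ z : Fin r → Bool, ∑ y : Fin k → Bool, V z y * (pZ z * pY y)) := by
  have hR' : 0 ≤ 1 / R := by positivity
  have hshared : (fun y => ∑ m ∈ range (2 ^ r),
        V (fun j : Fin r => m.testBit j) y * pZ (fun j : Fin r => m.testBit j))
      = fun y => ∑ z, V z y * pZ z :=
    funext fun y => sum_range_two_pow_testBit r fun z => V z y * pZ z
  refine ⟨mul_le_mul_of_nonneg_left ?_ hR', mul_le_mul_of_nonneg_left ?_ hR'⟩
  · exact sum_varY_mul_sq_le_varY_sum_mul pY _ _ _ (fun m _ => hpZ0 _) hcov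
  · rw [hshared]
    exact varY_sum_mul_le pY univ V pZ (fun z _ => hpZ0 z) hpZ1 hpY0

/-- Theorem 4.1: if R_m = R for all m and the V(z_k,Y), V(z_l,Y) are positively
correlated for all k ≠ l, then Var(θ̂_s) ≤ Var(θ̃) ≤ Var(θ̂): the Partitioned MC
estimator has smaller variance than the Shared Sample MC estimator, which in
turn has smaller variance than the basic MC estimator.  Here
Var(θ̂_s) = (1/R) ∑_m Var_Y(V(z_m,Y)) P(D_m)², with P(D_m) = pZ(z_m),
Var(θ̃) = (1/R) Var_Y(∑_m V(z_m,Y) P(D_m)), and Var(θ̂) = Var(V(Z,Y))/R. -/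
theorem partitioned_vs_shared_vs_basic (r k : ℕ) (R : ℝ) (hR : 0 < R)
    (pZ : (Fin r → Bool) → ℝ) (pY : (Fin k → Bool) → ℝ)
    (V : (Fin r → Bool) → (Fin k → Bool) → ℝ)
    (hpZ0 : ∀ z, 0 ≤ pZ z) (hpZ1 : ∑ z : Fin r → Bool, pZ z = 1)
    (hpY0 : ∀ y, 0 ≤ pY y) (hpY1 : ∑ y : Fin k → Bool, pY y = 1)
    (hcov : ∀ kk ∈ Finset.range (2 ^ r), ∀ ll ∈ Finset.range (2 ^ r), kk ≠ ll →
      0 ≤ covY k pY (V (fun j : Fin r => kk.testBit j)) (V (fun j : Fin r => ll.testBit j))) :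
    (fun θ : ℝ =>
      (fun varPart varShared varBasic : ℝ =>
        varPart ≤ varShared ∧ varShared ≤ varBasic)
        ((1 / R) * ∑ m ∈ Finset.range (2 ^ r),
          varY k pY (V (fun j : Fin r => m.testBit j)) * pZ (fun j : Fin r => m.testBit j) ^ 2)
        ((1 / R) * varY k pY (fun y => ∑ m ∈ Finset.range (2 ^ r),
          V (fun j : Fin r => m.testBit j) y * pZ (fun j : Fin r => m.testBit j)))
        ((1 / R) * ∑ z : Fin r → Bool, ∑ y : Fin k → Bool,
          (V z y - θ) ^ 2 * (pZ z * pY y)))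
      (∑ z : Fin r → Bool, ∑ y : Fin k → Bool, V z y * (pZ z * pY y)) :=
  partitioned_vs_shared_vs_basic_general r k R hR pZ pY V hpZ0 hpZ1 hpY0 hcov
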